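/- arXiv:2209.14662 — 5 statements merged into one kernel-verified Lean document; each statement's English description precedes it below -/
import Mathlib

section
/- If a ≥ (2+ε)·log₂(n) for some ε > 0, then n^{2a} · 2^{-a^2} ≤ 2^{-(ε²+2ε)·log₂(n)²}; in particular the probability that a random graph G(n,1/2) contains K_{a,a} as a subgraph tends to 0 as n → ∞. -/
/-!
A graph containing `K_{a,a}` is fixed by choosing the two sides (at most `(n choose a)² ≤ n^{2a}`
ways) and then forcing the `a²` edges between them, which leaves a `2^{-a²}` fraction of all
graphs; so the probability is at most `n^{2a} 2^{-a²}`. Writing `n = 2^L`, the exponent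
`2aL - a²` is at most `-(ε² + 2ε)L²` once `a ≥ (2 + ε)L`, and this tends to `-∞`.
-/

open scoped Classical

/-- A graph on `Fin n`, encoded as `f : Sym2 (Fin n) → Bool`, contains `K_{a,a}` as a
subgraph. -/
def ContainsBiclique (n : ℕ) (f : Sym2 (Fin n) → Bool) (a : ℕ) : Prop :=
  ∃ A B : Finset (Fin n), Disjoint A B ∧ A.card = a ∧ B.card = a ∧
    ∀ u ∈ A, ∀ v ∈ B, f s(u, v) = true

/-- The probability that `G(n, 1/2)` contains `K_{a,a}` as a subgraph. -/
noncomputable def bicliqueProb (n a : ℕ) : ℝ :=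
  (Fintype.card {f : Sym2 (Fin n) → Bool // ContainsBiclique n f a} : ℝ) /
    (Fintype.card (Sym2 (Fin n) → Bool) : ℝ)

open Finset Filter

section Counting

variable {α : Type*} [DecidableEq α]

theorem card_filter_forall_eq_true_mul_two_pow [Fintype α] (s : Finset α) :
    #{f : α → Bool | ∀ e ∈ s, f e = true} * 2 ^ #s = 2 ^ Fintype.card α := by
  have hpi : ({f : α → Bool | ∀ e ∈ s, f e = true} : Finset _) =
      Fintype.piFinset fun e => if e ∈ s then {true} else univ := by
    ext f
    simp only [mem_filter, mem_univ, true_and, Fintype.mem_piFinset]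
    refine forall_congr' fun e => ?_
    split_ifs <;> simp [*]
  have hcompl : #{e | e ∉ s} = Fintype.card α - #s := by
    rw [filter_not, filter_mem_eq_inter, univ_inter, card_sdiff_of_subset (subset_univ s),
      card_univ]
  rw [hpi, Fintype.card_piFinset]
  simp only [apply_ite, card_singleton, card_univ, Fintype.card_bool, prod_ite, prod_const_one,
    prod_const, one_mul, hcompl, ← pow_add, Nat.sub_add_cancel (card_le_univ s)]

def bicliqueEdges (A B : Finset α) : Finset (Sym2 α) :=
  image₂ (fun u v => s(u, v)) A B

theorem card_bicliqueEdges {A B : Finset α} (h : Disjoint A B) :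
    #(bicliqueEdges A B) = #A * #B := by
  refine card_image₂_iff.2 ?_
  rintro ⟨u, v⟩ huv ⟨u', v'⟩ huv' he
  simp only [Set.mem_prod, mem_coe] at huv huv'
  rcases Sym2.eq_iff.1 he with ⟨rfl, rfl⟩ | ⟨rfl, rfl⟩
  · rfl
  · exact (disjoint_left.1 h huv.1 huv'.2).elim

end Counting

theorem containsBiclique_iff {n : ℕ} {f : Sym2 (Fin n) → Bool} {a : ℕ} :
    ContainsBiclique n f a ↔ ∃ A B : Finset (Fin n), Disjoint A B ∧ #A = a ∧ #B = a ∧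
      ∀ e ∈ bicliqueEdges A B, f e = true := by
  simp only [ContainsBiclique, bicliqueEdges, forall_mem_image₂]

/-- Union bound over the `≤ (n choose a)²` placements of the two sides. -/
theorem card_containsBiclique_mul_le (n a : ℕ) :
    #{f : Sym2 (Fin n) → Bool | ContainsBiclique n f a} * 2 ^ (a ^ 2) ≤
      n.choose a ^ 2 * 2 ^ Fintype.card (Sym2 (Fin n)) := by
  set T : Finset (Finset (Fin n) × Finset (Fin n)) :=
    {p ∈ powersetCard a univ ×ˢ powersetCard a univ | Disjoint p.1 p.2}
  set F : Finset (Fin n) × Finset (Fin n) → Finset (Sym2 (Fin n) → Bool) :=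
    fun p => {f | ∀ e ∈ bicliqueEdges p.1 p.2, f e = true}
  have hsub :
      ({f : Sym2 (Fin n) → Bool | ContainsBiclique n f a} : Finset _) ⊆ T.biUnion F := by
    intro f hf
    obtain ⟨A, B, hAB, hA, hB, hf⟩ := containsBiclique_iff.1 (mem_filter.1 hf).2
    exact mem_biUnion.2 ⟨(A, B), by simp [T, hAB, hA, hB], by simpa [F] using hf⟩
  have hF : ∀ p ∈ T, #(F p) * 2 ^ (a ^ 2) = 2 ^ Fintype.card (Sym2 (Fin n)) := by
    intro p hp
    simp only [T, mem_filter, mem_product, mem_powersetCard] at hp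
    rw [← card_filter_forall_eq_true_mul_two_pow, card_bicliqueEdges hp.2, hp.1.1.2, hp.1.2.2,
      sq]
  have hT : #T ≤ n.choose a ^ 2 :=
    (card_filter_le _ _).trans (by simp [sq])
  calc #{f : Sym2 (Fin n) → Bool | ContainsBiclique n f a} * 2 ^ (a ^ 2)
      ≤ (∑ p ∈ T, #(F p)) * 2 ^ (a ^ 2) := by
        gcongr
        exact (card_le_card hsub).trans card_biUnion_le
    _ = #T * 2 ^ Fintype.card (Sym2 (Fin n)) := by
        rw [sum_mul, sum_congr rfl hF, sum_const, smul_eq_mul]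
    _ ≤ n.choose a ^ 2 * 2 ^ Fintype.card (Sym2 (Fin n)) := by gcongr

theorem bicliqueProb_le (n a : ℕ) : bicliqueProb n a ≤ (n : ℝ) ^ (2 * a) / 2 ^ (a ^ 2) := by
  have hcount : (#{f : Sym2 (Fin n) → Bool | ContainsBiclique n f a} : ℝ) * 2 ^ (a ^ 2) ≤
      n.choose a ^ 2 * 2 ^ Fintype.card (Sym2 (Fin n)) := by
    exact_mod_cast card_containsBiclique_mul_le n a
  have hchoose : (n.choose a : ℝ) ^ 2 ≤ (n : ℝ) ^ (2 * a) := by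
    rw [mul_comm, pow_mul]
    gcongr
    exact_mod_cast n.choose_le_pow a
  rw [bicliqueProb, Fintype.card_subtype, Fintype.card_fun, Fintype.card_bool,
    le_div_iff₀ (by positivity), div_mul_eq_mul_div, div_le_iff₀ (by positivity)]
  push_cast
  exact hcount.trans (by gcongr)

open Real

/-- The exponent gap factors as `a² - 2aL - (ε² + 2ε)L² = (a - (2 + ε)L)(a + εL)`. -/
theorem rpow_two_mul_mul_two_rpow_neg_sq_le {ε x a : ℝ} (hε : 0 ≤ ε) (hx : 1 ≤ x)
    (ha : (2 + ε) * logb 2 x ≤ a) :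
    x ^ (2 * a) * 2 ^ (-a ^ 2) ≤ 2 ^ (-((ε ^ 2 + 2 * ε) * logb 2 x ^ 2)) := by
  have hL : 0 ≤ logb 2 x := logb_nonneg one_lt_two hx
  conv_lhs => rw [← rpow_logb two_pos (by norm_num) (zero_lt_one.trans_le hx)]
  rw [← rpow_mul zero_le_two, ← rpow_add two_pos, rpow_le_rpow_left_iff one_lt_two]
  nlinarith [mul_nonneg (sub_nonneg.2 ha) (by nlinarith : 0 ≤ a + ε * logb 2 x)]

theorem tendsto_two_rpow_neg_mul_logb_sq {c : ℝ} (hc : 0 < c) :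
    Tendsto (fun n : ℕ => (2 : ℝ) ^ (-(c * logb 2 n ^ 2))) atTop (nhds 0) :=
  (tendsto_rpow_atBot_of_base_gt_one 2 one_lt_two).comp <| tendsto_neg_atTop_atBot.comp <|
    ((tendsto_pow_atTop two_ne_zero).comp <|
      (tendsto_logb_atTop one_lt_two).comp tendsto_natCast_atTop_atTop).const_mul_atTop hc

/-- if `a ≥ (2+ε)·log₂ n` then `n^{2a}·2^{-a²} ≤ 2^{-(ε²+2ε)·log₂(n)²}`;
in particular, the probability that `G(n,1/2)` contains `K_{a,a}` tends to `0`. -/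
theorem stmt_2 (ε : ℝ) (hε : 0 < ε) :
    (∀ (n : ℕ) (a : ℝ), 2 ≤ n → (2 + ε) * Real.logb 2 n ≤ a →
      (n : ℝ) ^ (2 * a) * 2 ^ (-(a ^ 2)) ≤
        2 ^ (-((ε ^ 2 + 2 * ε) * (Real.logb 2 n) ^ 2))) ∧
    (∀ a : ℕ → ℕ, (∀ n : ℕ, (2 + ε) * Real.logb 2 n ≤ (a n : ℝ)) →
      Filter.Tendsto (fun n => bicliqueProb n (a n)) Filter.atTop (nhds 0)) := by
  refine ⟨fun n a hn ha => rpow_two_mul_mul_two_rpow_neg_sq_le hε.le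
    (by exact_mod_cast one_le_two.trans hn) ha, fun a ha => ?_⟩
  refine squeeze_zero' (Eventually.of_forall fun n => ?_) ?_
    (tendsto_two_rpow_neg_mul_logb_sq (by positivity : 0 < ε ^ 2 + 2 * ε))
  · exact div_nonneg (Nat.cast_nonneg _) (Nat.cast_nonneg _)
  · filter_upwards [eventually_ge_atTop 1] with n hn
    calc bicliqueProb n (a n) ≤ (n : ℝ) ^ (2 * a n) / 2 ^ (a n ^ 2) := bicliqueProb_le n (a n)
      _ = (n : ℝ) ^ (2 * (a n : ℝ)) * 2 ^ (-(a n : ℝ) ^ 2) := by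
        rw [rpow_neg zero_le_two, ← div_eq_mul_inv]
        norm_cast
      _ ≤ _ := rpow_two_mul_mul_two_rpow_neg_sq_le hε.le (by exact_mod_cast hn) (ha n)
end

section
/- For every k ∈ ℕ there exists a constant c_k > 0 such that for all sufficiently large n there is a simple graph G on n vertices satisfying: (1) G has at least n²/8 edges; (2) G contains no complete bipartite subgraph K_{a,a} with a ≥ 3·log₂(n); and (3) G contains at least c_k · n^k many k-cliques. -/
/-!
Count graphs on a fixed vertex set of size `n`, i.e. work in `G(n, 1/2)` with `M = C(n,2)`.
A `k`-set is a clique in a `2^(-C(k,2))` fraction of all graphs, so the average number of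
`k`-cliques is `C(n,k) / 2^C(k,2)`; since no graph has more than `C(n,k)` of them, at least a
`2^(-C(k,2)-1)` fraction of the graphs has at least half the average. On the other hand, at most
`4^M / 3^(M-t)` graphs have fewer than `t ≈ M/4` edges, and at most `C(n,a)² 2^(M-a²)` graphs
contain a `K_{a,a}` with `a = 3⌊log₂ n⌋`. For large `n` both are a much smaller fraction than
`2^(-C(k,2)-1)`, so some graph has all three properties.
-/

open scoped Classical

open Finset

namespace Nat

theorem two_mul_choose_two_add (n : ℕ) : 2 * n.choose 2 + n = n ^ 2 := by
  cases n with
  | zero => rfl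
  | succ m =>
    have := add_one_mul_choose_eq m 1
    rw [choose_one_right] at this
    nlinarith

theorem two_pow_le_three_pow {m j : ℕ} (h : 2 * m ≤ 3 * j) : 2 ^ m ≤ 3 ^ j := by
  rw [← Nat.pow_le_pow_iff_left two_ne_zero, ← pow_mul, ← pow_mul]
  calc 2 ^ (m * 2) ≤ 2 ^ (3 * j) := Nat.pow_le_pow_right two_pos (by omega)
    _ = 8 ^ j := by rw [pow_mul]; norm_num
    _ ≤ 9 ^ j := Nat.pow_le_pow_left (by norm_num) j
    _ = 3 ^ (j * 2) := by rw [mul_comm, pow_mul]; norm_num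

theorem two_pow_choose_two_add_le_three_pow {n K : ℕ} (hn : 16 * K + 100 ≤ n) :
    2 ^ (n.choose 2 + K + 3) ≤ 3 ^ (n.choose 2 - (n ^ 2 / 8 + 1)) := by
  apply two_pow_le_three_pow
  have h_choose := two_mul_choose_two_add n
  have h_div := Nat.mul_div_le (n ^ 2) 8
  have h_sq : 100 * n ≤ n ^ 2 := by nlinarith
  omega

theorem choose_sq_mul_two_pow_le {n l K : ℕ} (hn : n < 2 ^ (l + 1)) (hl : K + 3 ≤ l) :
    n.choose (3 * l) ^ 2 * 2 ^ (K + 3) ≤ 2 ^ (3 * l * (3 * l)) := by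
  calc n.choose (3 * l) ^ 2 * 2 ^ (K + 3) ≤ ((2 ^ (l + 1)) ^ (3 * l)) ^ 2 * 2 ^ (K + 3) := by
        gcongr
        exact (choose_le_pow _ _).trans (Nat.pow_le_pow_left hn.le _)
    _ = 2 ^ (6 * l * (l + 1) + K + 3) := by ring
    _ ≤ 2 ^ (3 * l * (3 * l)) := Nat.pow_le_pow_right two_pos (by nlinarith)

theorem pow_le_two_pow_mul_factorial_mul_choose {n k : ℕ} (h : 2 * k ≤ n) :
    n ^ k ≤ 2 ^ k * k.factorial * n.choose k :=
  calc n ^ k ≤ (2 * (n + 1 - k)) ^ k := Nat.pow_le_pow_left (by omega) k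
    _ = 2 ^ k * (n + 1 - k) ^ k := mul_pow _ _ _
    _ ≤ 2 ^ k * n.descFactorial k := Nat.mul_le_mul_left _ (pow_sub_le_descFactorial n k)
    _ = 2 ^ k * k.factorial * n.choose k := by
      rw [descFactorial_eq_factorial_mul_choose, mul_assoc]

end Nat

namespace Finset

variable {α ι : Type*}

theorem card_filter_card_lt_mul_le (U : Finset α) (t : ℕ) :
    #{s ∈ U.powerset | #s < t} * 3 ^ (#U - t) ≤ 4 ^ #U := by
  calc #{s ∈ U.powerset | #s < t} * 3 ^ (#U - t)
      = ∑ s ∈ U.powerset with #s < t, 3 ^ (#U - t) := by rw [sum_const, smul_eq_mul]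
    _ ≤ ∑ s ∈ U.powerset with #s < t, 3 ^ #(U \ s) := by
        refine sum_le_sum fun s hs => Nat.pow_le_pow_right (by norm_num) ?_
        rw [mem_filter, mem_powerset] at hs
        rw [card_sdiff_of_subset hs.1]
        omega
    _ ≤ ∑ s ∈ U.powerset, 3 ^ #(U \ s) := sum_le_sum_of_subset (filter_subset _ _)
    _ = 4 ^ #U := by
        simpa [pow_card_mul_prod] using (prod_add (fun _ => (1 : ℕ)) (fun _ => 3) U).symm

theorem sum_le_card_mul_add_card_filter_mul (s : Finset ι) (f : ι → ℕ) (m C : ℕ)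
    (hf : ∀ i ∈ s, f i ≤ C) :
    ∑ i ∈ s, f i ≤ #s * m + #{i ∈ s | m ≤ f i} * C := by
  rw [← sum_filter_not_add_sum_filter s (fun i => m ≤ f i)]
  gcongr
  · calc ∑ i ∈ s with ¬m ≤ f i, f i ≤ #{i ∈ s | ¬m ≤ f i} * m :=
          sum_le_card_nsmul _ _ _ fun i hi => by rw [mem_filter] at hi; omega
      _ ≤ #s * m := Nat.mul_le_mul_right _ (card_filter_le _ _)
  · exact sum_le_card_nsmul _ _ _ fun i hi => hf i (mem_filter.1 hi).1

end Finset

namespace Sym2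

variable {α : Type*}

theorem card_image_product_of_disjoint [DecidableEq α] {A B : Finset α} (h : Disjoint A B) :
    #((A ×ˢ B).image (Function.uncurry Sym2.mk)) = #A * #B := by
  rw [card_image_of_injOn, card_product]
  rintro ⟨u, v⟩ huv ⟨u', v'⟩ huv' he
  simp only [coe_product, Set.mem_prod, mem_coe] at huv huv'
  rcases Sym2.eq_iff.1 he with ⟨rfl, rfl⟩ | ⟨rfl, rfl⟩
  · rfl
  · exact absurd huv'.2 (Finset.disjoint_left.1 h huv.1)

end Sym2

namespace SimpleGraph

theorem not_isCompleteBetween_of_le {V : Type*} {G : SimpleGraph V} {a b : ℕ}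
    (h : ∀ A B : Finset V, #A = a → #B = a → ¬G.IsCompleteBetween A B) (hab : a ≤ b)
    (A B : Finset V) (hA : #A = b) (hB : #B = b) : ¬G.IsCompleteBetween A B := by
  intro hAB
  obtain ⟨A', hA', hA'_card⟩ := exists_subset_card_eq (hA ▸ hab)
  obtain ⟨B', hB', hB'_card⟩ := exists_subset_card_eq (hB ▸ hab)
  exact h A' B' hA'_card hB'_card fun u hu v hv => hAB (hA' hu) (hB' hv)

variable {V : Type*} [Fintype V]

theorem card_filter_edgeFinset (p : Finset (Sym2 V) → Prop) [DecidablePred p] :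
    #{G : SimpleGraph V | p G.edgeFinset} =
      #{s ∈ (⊤ : SimpleGraph V).edgeFinset.powerset | p s} := by
  have edgeSet_fromEdgeSet_coe {s : Finset (Sym2 V)} (hs : s ⊆ (⊤ : SimpleGraph V).edgeFinset) :
      (fromEdgeSet (s : Set (Sym2 V))).edgeSet = s := by
    rw [edgeSet_fromEdgeSet, sdiff_eq_left, Set.disjoint_left]
    exact fun e he hd => by simpa [hd] using hs he
  refine card_bij' (fun G _ => G.edgeFinset) (fun s _ => fromEdgeSet s) ?_ ?_ ?_ ?_
  · intro G hG
    rw [mem_filter] at hG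
    exact mem_filter.2 ⟨mem_powerset.2 (edgeFinset_mono le_top), hG.2⟩
  · intro s hs
    rw [mem_filter, mem_powerset] at hs
    refine mem_filter.2 ⟨mem_univ _, ?_⟩
    convert hs.2
    rw [← coe_inj, coe_edgeFinset, edgeSet_fromEdgeSet_coe hs.1]
  · intro G _
    simp
  · intro s hs
    rw [← coe_inj, coe_edgeFinset,
      edgeSet_fromEdgeSet_coe (mem_powerset.1 (mem_filter.1 hs).1)]

theorem card_filter_subset_edgeFinset_mul {S : Finset (Sym2 V)} (hS : ∀ e ∈ S, ¬e.IsDiag) :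
    #{G : SimpleGraph V | S ⊆ G.edgeFinset} * 2 ^ #S = 2 ^ (Fintype.card V).choose 2 := by
  have hS_top : S ⊆ (⊤ : SimpleGraph V).edgeFinset := fun e he => by simpa using hS e he
  have hIcc : {s ∈ (⊤ : SimpleGraph V).edgeFinset.powerset | S ⊆ s} =
      Icc S (⊤ : SimpleGraph V).edgeFinset := by
    ext s; simp [and_comm]
  rw [card_filter_edgeFinset (S ⊆ ·), hIcc, card_Icc_finset hS_top, ← pow_add,
    Nat.sub_add_cancel (card_le_card hS_top), card_edgeFinset_top_eq_card_choose_two]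

theorem card_filter_card_edgeFinset_lt_mul (t : ℕ) :
    #{G : SimpleGraph V | #G.edgeFinset < t} * 3 ^ ((Fintype.card V).choose 2 - t) ≤
      4 ^ (Fintype.card V).choose 2 := by
  rw [card_filter_edgeFinset (#· < t), ← card_edgeFinset_top_eq_card_choose_two]
  exact card_filter_card_lt_mul_le _ t

theorem isClique_iff_image_offDiag_subset {G : SimpleGraph V} {T : Finset V} :
    G.IsClique (T : Set V) ↔ T.offDiag.image (Function.uncurry Sym2.mk) ⊆ G.edgeFinset := by
  simp only [subset_iff, mem_image, mem_offDiag, mem_edgeFinset]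
  constructor
  · rintro h _ ⟨⟨u, v⟩, ⟨hu, hv, huv⟩, rfl⟩
    exact h hu hv huv
  · intro h u hu v hv huv
    exact h ⟨(u, v), ⟨hu, hv, huv⟩, rfl⟩

theorem isCompleteBetween_iff_image_product_subset {G : SimpleGraph V} {A B : Finset V} :
    G.IsCompleteBetween A B ↔ (A ×ˢ B).image (Function.uncurry Sym2.mk) ⊆ G.edgeFinset := by
  simp only [subset_iff, mem_image, mem_product, mem_edgeFinset]
  constructor
  · rintro h _ ⟨⟨u, v⟩, ⟨hu, hv⟩, rfl⟩
    exact h hu hv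
  · intro h u hu v hv
    exact h ⟨(u, v), ⟨hu, hv⟩, rfl⟩

theorem card_filter_isClique_mul (T : Finset V) :
    #{G : SimpleGraph V | G.IsClique (T : Set V)} * 2 ^ (#T).choose 2 =
      2 ^ (Fintype.card V).choose 2 := by
  rw [filter_congr fun G _ => isClique_iff_image_offDiag_subset (G := G) (T := T),
    ← Sym2.card_image_offDiag]
  refine card_filter_subset_edgeFinset_mul fun e he => ?_
  obtain ⟨⟨u, v⟩, huv, rfl⟩ := mem_image.1 he
  simpa using (mem_offDiag.1 huv).2.2

theorem card_filter_isCompleteBetween_mul_le (A B : Finset V) :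
    #{G : SimpleGraph V | G.IsCompleteBetween A B} * 2 ^ (#A * #B) ≤
      2 ^ (Fintype.card V).choose 2 := by
  by_cases hAB : Disjoint A B
  · rw [filter_congr fun G _ =>
        isCompleteBetween_iff_image_product_subset (G := G) (A := A) (B := B),
      ← Sym2.card_image_product_of_disjoint hAB, card_filter_subset_edgeFinset_mul]
    intro e he h
    obtain ⟨⟨u, v⟩, huv, rfl⟩ := mem_image.1 he
    rw [mem_product] at huv
    exact Finset.disjoint_left.1 hAB huv.1 (Sym2.mk_isDiag_iff.1 h ▸ huv.2)
  · rw [filter_false_of_mem fun G _ h => hAB (disjoint_coe.1 h.disjoint)]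
    simp

theorem card_filter_exists_isCompleteBetween_mul_le (a : ℕ) :
    #{G : SimpleGraph V | ∃ A B : Finset V, #A = a ∧ #B = a ∧ G.IsCompleteBetween A B} *
        2 ^ (a * a) ≤
      (Fintype.card V).choose a ^ 2 * 2 ^ (Fintype.card V).choose 2 := by
  set P := powersetCard a (univ : Finset V) ×ˢ powersetCard a (univ : Finset V)
  have hsub : univ.filter (fun G : SimpleGraph V =>
        ∃ A B : Finset V, #A = a ∧ #B = a ∧ G.IsCompleteBetween A B) ⊆
      P.biUnion fun AB =>
        univ.filter fun G : SimpleGraph V => G.IsCompleteBetween AB.1 AB.2 := by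
    intro G hG
    obtain ⟨A, B, hA, hB, hAB⟩ := (mem_filter.1 hG).2
    refine mem_biUnion.2 ⟨(A, B), ?_, mem_filter.2 ⟨mem_univ _, hAB⟩⟩
    exact mem_product.2 ⟨mem_powersetCard_univ.2 hA, mem_powersetCard_univ.2 hB⟩
  calc _ ≤ (∑ AB ∈ P, #{G : SimpleGraph V | G.IsCompleteBetween AB.1 AB.2}) * 2 ^ (a * a) :=
        Nat.mul_le_mul_right _ ((card_le_card hsub).trans card_biUnion_le)
    _ ≤ ∑ _AB ∈ P, 2 ^ (Fintype.card V).choose 2 := by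
        rw [sum_mul]
        refine sum_le_sum fun AB hAB => ?_
        obtain ⟨hA, hB⟩ := mem_product.1 hAB
        have := card_filter_isCompleteBetween_mul_le AB.1 AB.2
        rwa [mem_powersetCard_univ.1 hA, mem_powersetCard_univ.1 hB] at this
    _ = _ := by simp [P, sq]

theorem sum_card_cliqueFinset_mul (k : ℕ) :
    (∑ G : SimpleGraph V, #(G.cliqueFinset k)) * 2 ^ k.choose 2 =
      (Fintype.card V).choose k * 2 ^ (Fintype.card V).choose 2 := by
  have hswap : ∑ G : SimpleGraph V, #(G.cliqueFinset k) =
      ∑ T ∈ powersetCard k (univ : Finset V),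
        #{G : SimpleGraph V | G.IsClique (T : Set V)} := by
    simp_rw [card_filter]
    rw [← sum_comm]
    refine sum_congr rfl fun G _ => ?_
    rw [← card_filter]
    congr 1
    ext T
    simp [mem_cliqueFinset_iff, isNClique_iff, and_comm]
  rw [hswap, sum_mul, sum_congr rfl fun T hT => ?_, sum_const, card_powersetCard, card_univ,
    smul_eq_mul]
  rw [← (mem_powersetCard_univ.1 hT)]
  exact card_filter_isClique_mul T

theorem card_univ_simpleGraph :
    #(univ : Finset (SimpleGraph V)) = 2 ^ (Fintype.card V).choose 2 := by
  simpa using card_filter_subset_edgeFinset_mul (V := V) (S := ∅) (by simp)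

theorem two_pow_le_card_filter_choose_le_card_cliqueFinset_mul {k : ℕ}
    (hk : k ≤ Fintype.card V) :
    2 ^ (Fintype.card V).choose 2 ≤
      #{G : SimpleGraph V |
          (Fintype.card V).choose k ≤ 2 ^ (k.choose 2 + 1) * #(G.cliqueFinset k)} *
        2 ^ (k.choose 2 + 1) := by
  set C := (Fintype.card V).choose k
  set M := (Fintype.card V).choose 2
  have hC : 0 < C := Nat.choose_pos hk
  have hmarkov := sum_le_card_mul_add_card_filter_mul univ
    (fun G : SimpleGraph V => 2 ^ (k.choose 2 + 1) * #(G.cliqueFinset k)) C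
    (2 ^ (k.choose 2 + 1) * C) fun G _ => Nat.mul_le_mul_left _ card_cliqueFinset_le
  have hsum :
      ∑ G : SimpleGraph V, 2 ^ (k.choose 2 + 1) * #(G.cliqueFinset k) = 2 * (C * 2 ^ M) := by
    rw [← mul_sum, ← sum_card_cliqueFinset_mul, pow_succ]
    ring
  rw [hsum, card_univ_simpleGraph] at hmarkov
  refine Nat.le_of_mul_le_mul_left (c := C) ?_ hC
  linarith

theorem exists_many_edges_many_cliques_no_biclique {k a t : ℕ} (hk : k ≤ Fintype.card V)
    (ht : 2 ^ ((Fintype.card V).choose 2 + k.choose 2 + 3) ≤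
      3 ^ ((Fintype.card V).choose 2 - t))
    (ha : (Fintype.card V).choose a ^ 2 * 2 ^ (k.choose 2 + 3) ≤ 2 ^ (a * a)) :
    ∃ G : SimpleGraph V, t ≤ G.edgeSet.ncard ∧
      (∀ A B : Finset V, #A = a → #B = a → ¬G.IsCompleteBetween A B) ∧
      (Fintype.card V).choose k ≤ 2 ^ (k.choose 2 + 1) * {s | G.IsNClique k s}.ncard := by
  set M := (Fintype.card V).choose 2
  set K := k.choose 2
  set many := univ.filter fun G : SimpleGraph V =>
    (Fintype.card V).choose k ≤ 2 ^ (K + 1) * #(G.cliqueFinset k)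
  set sparse := univ.filter fun G : SimpleGraph V => #G.edgeFinset < t
  set biclique := univ.filter fun G : SimpleGraph V =>
    ∃ A B : Finset V, #A = a ∧ #B = a ∧ G.IsCompleteBetween A B
  have h_many : 2 ^ M ≤ #many * 2 ^ (K + 1) :=
    two_pow_le_card_filter_choose_le_card_cliqueFinset_mul hk
  have h_sparse : #sparse * 2 ^ (K + 3) ≤ 2 ^ M := by
    refine Nat.le_of_mul_le_mul_right ?_ (by positivity : 0 < 2 ^ M)
    calc #sparse * 2 ^ (K + 3) * 2 ^ M = #sparse * 2 ^ (M + K + 3) := by ring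
      _ ≤ #sparse * 3 ^ (M - t) := Nat.mul_le_mul_left _ ht
      _ ≤ 4 ^ M := card_filter_card_edgeFinset_lt_mul t
      _ = 2 ^ M * 2 ^ M := by rw [← mul_pow]; norm_num
  have h_biclique : #biclique * 2 ^ (K + 3) ≤ 2 ^ M := by
    refine Nat.le_of_mul_le_mul_right ?_ (by positivity : 0 < 2 ^ (a * a))
    calc #biclique * 2 ^ (K + 3) * 2 ^ (a * a)
        = #biclique * 2 ^ (a * a) * 2 ^ (K + 3) := by ring
      _ ≤ (Fintype.card V).choose a ^ 2 * 2 ^ M * 2 ^ (K + 3) :=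
        Nat.mul_le_mul_right _ (card_filter_exists_isCompleteBetween_mul_le a)
      _ = (Fintype.card V).choose a ^ 2 * 2 ^ (K + 3) * 2 ^ M := by ring
      _ ≤ 2 ^ (a * a) * 2 ^ M := Nat.mul_le_mul_right _ ha
      _ = 2 ^ M * 2 ^ (a * a) := mul_comm _ _
  have h_lt : #(sparse ∪ biclique) < #many := by
    refine lt_of_le_of_lt (card_union_le _ _) (Nat.lt_of_mul_lt_mul_right (a := 2 ^ (K + 3)) ?_)
    have : 0 < 2 ^ M := by positivity
    calc (#sparse + #biclique) * 2 ^ (K + 3) ≤ 2 * 2 ^ M := by linarith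
      _ < 4 * 2 ^ M := by linarith
      _ ≤ 4 * (#many * 2 ^ (K + 1)) := Nat.mul_le_mul_left 4 h_many
      _ = #many * 2 ^ (K + 3) := by ring
  obtain ⟨G, hG_many, hG_good⟩ := exists_mem_notMem_of_card_lt_card h_lt
  simp only [many, sparse, biclique, mem_union, mem_filter, mem_univ, true_and, not_or, not_lt,
    not_exists, not_and] at hG_many hG_good
  refine ⟨G, ?_, hG_good.2, ?_⟩
  · rw [← coe_edgeFinset, Set.ncard_coe_finset]
    exact hG_good.1
  · rwa [← cliqueSet, ← coe_cliqueFinset, Set.ncard_coe_finset]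

end SimpleGraph

/-- for every `k` there is `c_k > 0` such that for all sufficiently large `n`
there is a graph `G` on `n` vertices with (1) at least `n²/8` edges, (2) no complete
bipartite subgraph `K_{a,a}` with `a ≥ 3·log₂ n`, and (3) at least `c_k·n^k` many
`k`-cliques. -/
theorem stmt_4 (k : ℕ) :
    ∃ c : ℝ, 0 < c ∧ ∃ N : ℕ, ∀ n : ℕ, N ≤ n → ∃ G : SimpleGraph (Fin n),
      ((n : ℝ) ^ 2 / 8 ≤ (G.edgeSet.ncard : ℝ)) ∧
      (∀ a : ℕ, 3 * Real.logb 2 n ≤ (a : ℝ) →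
        ∀ A B : Finset (Fin n), Disjoint A B → A.card = a → B.card = a →
          ¬ (∀ u ∈ A, ∀ v ∈ B, G.Adj u v)) ∧
      (c * (n : ℝ) ^ k ≤ ({t : Finset (Fin n) | G.IsNClique k t}.ncard : ℝ)) := by
  set K := k.choose 2
  refine ⟨(2 ^ (K + 1) * 2 ^ k * k.factorial : ℝ)⁻¹, by positivity,
    2 ^ (K + 3) + 16 * K + 2 * k + 100, fun n hn => ?_⟩
  obtain ⟨hn_pow, hn_K, hn_k⟩ : 2 ^ (K + 3) ≤ n ∧ 16 * K + 100 ≤ n ∧ 2 * k ≤ n := by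
    have : 0 < 2 ^ (K + 3) := by positivity
    refine ⟨?_, ?_, ?_⟩ <;> linarith
  set l := Nat.log 2 n
  have hl : K + 3 ≤ l := Nat.le_log_of_pow_le one_lt_two hn_pow
  obtain ⟨G, h_edges, h_biclique, h_cliques⟩ :=
    SimpleGraph.exists_many_edges_many_cliques_no_biclique (V := Fin n) (k := k) (a := 3 * l)
      (t := n ^ 2 / 8 + 1) (by rw [Fintype.card_fin]; omega)
      (by simpa using Nat.two_pow_choose_two_add_le_three_pow hn_K)
      (by simpa using Nat.choose_sq_mul_two_pow_le (Nat.lt_pow_succ_log_self one_lt_two n) hl)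
  rw [Fintype.card_fin] at h_cliques
  refine ⟨G, ?_, fun a ha A B _ hA hB hAB => ?_, ?_⟩
  · rw [div_le_iff₀ (by norm_num)]
    exact_mod_cast (by omega : n ^ 2 ≤ G.edgeSet.ncard * 8)
  · have h3l : 3 * l ≤ a := by
      have := Real.natLog_le_logb n 2
      exact_mod_cast (by push_cast at this ⊢; linarith : (3 * l : ℝ) ≤ a)
    exact SimpleGraph.not_isCompleteBetween_of_le h_biclique h3l A B hA hB
      fun u hu v hv => hAB u hu v hv
  · have h_pow : (n : ℝ) ^ k ≤ 2 ^ k * k.factorial * n.choose k := by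
      exact_mod_cast Nat.pow_le_two_pow_mul_factorial_mul_choose hn_k
    rw [inv_mul_le_iff₀ (by positivity)]
    calc (n : ℝ) ^ k ≤ 2 ^ k * k.factorial * n.choose k := h_pow
      _ ≤ 2 ^ k * k.factorial * (2 ^ (K + 1) * {t | G.IsNClique k t}.ncard) := by
        gcongr; exact_mod_cast h_cliques
      _ = _ := by ring
end

section
/- Let A be an individualised σ-structure (every element a has unary colour P_a = {a}) with Gaifman graph G_A, and let H be a vertex-coloured graph whose colour classes P_a (a ∈ A) partition V(H). Define the structure φ(H) with universe V(H), the same colouring, and for each R ∈ σ of arity t, R^{φ(H)} = { (x_1,…,x_t) : for all i ≠ j with x_i ≠ x_j, {x_i,x_j} ∈ E(H) }. Then the set of homomorphisms from A to φ(H) equals the set of colour-preserving graph homomorphisms from the individualised Gaifman graph G_A^id to H. -/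
/-! Since the colour classes are disjoint, a colour-preserving map is injective, so it sends
the distinct entries of a tuple (the Gaifman edges of `A`) to distinct vertices of `H`; the
defining condition of `φ(H)` on the image tuple then says precisely that those Gaifman edges
go to edges of `H`. The unary colour relations of `A^id` say that the map is colour-preserving. -/

/-- A relational structure over signature `(σ, ar)` with universe `V`. -/
structure FinStructure (σ : Type) (ar : σ → ℕ) (V : Type) where
  rel : ∀ s : σ, Set (Fin (ar s) → V)

/-- `h` is a homomorphism of structures. -/
def StrHom {σ : Type} {ar : σ → ℕ} {V W : Type}
    (A : FinStructure σ ar V) (B : FinStructure σ ar W) (h : V → W) : Prop :=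
  ∀ s : σ, ∀ t ∈ A.rel s, (h ∘ t) ∈ B.rel s

/-- The individualisation `A^id` of `A` over the signature `σ ⊕ V`. -/
def individualise {σ : Type} {ar : σ → ℕ} {V : Type} (A : FinStructure σ ar V) :
    FinStructure (σ ⊕ V) (Sum.elim ar fun _ => 1) V where
  rel s := match s with
    | Sum.inl s => A.rel s
    | Sum.inr a => {t | t ⟨0, Nat.one_pos⟩ = a}

/-- The Gaifman graph of a structure. -/
def gaifman {σ : Type} {ar : σ → ℕ} {V : Type} (A : FinStructure σ ar V) :
    SimpleGraph V where
  Adj a b := a ≠ b ∧ ∃ s : σ, ∃ t ∈ A.rel s, (∃ i, t i = a) ∧ (∃ j, t j = b)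
  symm := by
    constructor
    intro a b h
    obtain ⟨hne, s, t, ht, hi, hj⟩ := h
    exact ⟨hne.symm, s, t, ht, hj, hi⟩
  loopless := ⟨fun a h => h.1 rfl⟩

/-- The structure `φ(H)` over `σ ⊕ V` built from a `V`-coloured graph `H` (with colour
classes `P`): universe `V(H)`, colouring as unary relations, and
`R^{φ(H)} = {(x_1,…,x_t) : x_i ≠ x_j → {x_i,x_j} ∈ E(H)}` for each `R ∈ σ`. -/
def phiStruct (σ : Type) (ar : σ → ℕ) {V W : Type} (H : SimpleGraph W) (P : V → Set W) :
    FinStructure (σ ⊕ V) (Sum.elim ar fun _ => 1) W where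
  rel s := match s with
    | Sum.inl _ => {t | ∀ i j, t i ≠ t j → H.Adj (t i) (t j)}
    | Sum.inr a => {t | t ⟨0, Nat.one_pos⟩ ∈ P a}

section

variable {σ : Type} {ar : σ → ℕ} {V W : Type}

theorem strHom_individualise_phiStruct_iff (A : FinStructure σ ar V) (H : SimpleGraph W)
    (P : V → Set W) (h : V → W) :
    StrHom (individualise A) (phiStruct σ ar H P) h ↔
      (∀ a, h a ∈ P a) ∧
        ∀ s, ∀ t ∈ A.rel s, ∀ i j, h (t i) ≠ h (t j) → H.Adj (h (t i)) (h (t j)) := by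
  constructor
  · intro hh
    exact ⟨fun a => hh (Sum.inr a) (fun _ => a) rfl, fun s => hh (Sum.inl s)⟩
  · rintro ⟨hcol, hrel⟩ (s | a) t ht
    · exact hrel s t ht
    · change h (t _) ∈ P a
      rw [show t _ = a from ht]
      exact hcol a

theorem injective_of_mem_colour {P : V → Set W} (hdisj : ∀ w, ∀ a b, w ∈ P a → w ∈ P b → a = b)
    {h : V → W} (hcol : ∀ a, h a ∈ P a) : Function.Injective h :=
  fun a b hab => hdisj (h a) a b (hcol a) (hab ▸ hcol b)

theorem gaifman_adj_map_of_tuple_adj {A : FinStructure σ ar V} {H : SimpleGraph W} {h : V → W}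
    (hinj : Function.Injective h)
    (hrel : ∀ s, ∀ t ∈ A.rel s, ∀ i j, h (t i) ≠ h (t j) → H.Adj (h (t i)) (h (t j)))
    {a b : V} (hab : (gaifman A).Adj a b) : H.Adj (h a) (h b) := by
  obtain ⟨hne, s, t, ht, ⟨i, rfl⟩, ⟨j, rfl⟩⟩ := hab
  exact hrel s t ht i j (hinj.ne hne)

theorem tuple_adj_of_gaifman_adj_map {A : FinStructure σ ar V} {H : SimpleGraph W} {h : V → W}
    (hadj : ∀ a b, (gaifman A).Adj a b → H.Adj (h a) (h b))
    {s : σ} {t : Fin (ar s) → V} (ht : t ∈ A.rel s) (i j : Fin (ar s))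
    (hne : h (t i) ≠ h (t j)) : H.Adj (h (t i)) (h (t j)) :=
  hadj _ _ ⟨fun he => hne (congrArg h he), s, t, ht, ⟨i, rfl⟩, ⟨j, rfl⟩⟩

end

/-- for an individualised structure `A^id` and a `V`-partitioned graph `H`,
the homomorphisms from `A^id` to `φ(H)` are exactly the colour-preserving graph
homomorphisms from the individualised Gaifman graph `G_A^id` to `H`. -/
theorem stmt_13 {σ : Type} {ar : σ → ℕ} {V W : Type}
    (A : FinStructure σ ar V) (H : SimpleGraph W) (P : V → Set W)
    (hpart : ∀ w : W, ∃! a : V, w ∈ P a) :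
    {h : V → W | StrHom (individualise A) (phiStruct σ ar H P) h} =
      {h : V → W | (∀ a : V, h a ∈ P a) ∧
        ∀ a b : V, (gaifman A).Adj a b → H.Adj (h a) (h b)} := by
  ext h
  simp only [Set.mem_ofPred_eq, strHom_individualise_phiStruct_iff]
  refine and_congr_right fun hcol => ⟨fun hrel a b => ?_, fun hadj s t ht => ?_⟩
  · have hinj := injective_of_mem_colour (fun w a b => (hpart w).unique) hcol
    exact gaifman_adj_map_of_tuple_adj hinj hrel
  · exact tuple_adj_of_gaifman_adj_map hadj ht
end

section
/- Let G_X, G_Y be graphs and M : V(G_Y) → 2^{V(G_X)} an almost-minor map. Let H be a V(G_X)-partitioned graph with colour classes P_x. Construct the V(G_Y)-partitioned graph H* with, for each y with M(y) = {x}, colour class {v_a^y : a ∈ P_x}, and for each y with M(y) = {x, x'} (x ≠ x'), colour class {v_{{a,b}}^y : a ∈ P_x, b ∈ P_{x'}}; edges between classes of adjacent y, y' are: a matching on the second index when M(y)=M(y'); edges of H when M(y)={x}, M(y')={x'} with {x,x'} ∈ E(G_X); complete bipartite when M(y)={x}, M(y')={x'}, x≠x', {x,x'} ∉ E(G_X);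 and {v_a^y, v_{{a,b}}^{y'}} for M(y)={x} ⊆ M(y')={x,x'}. Then the colour-preserving homomorphisms from G_Y^id to H* are exactly the maps h* with h ∈ Hom(G_X^id, H), where h*(y) = v_{h(x)}^y if M(y)={x} and h*(y) = v_{{h(x),h(x')}}^y if M(y)={x,x'}. -/
/-- `M : Y → 2^X` is an almost-minor map from `G_Y` to `G_X`. -/
def IsAlmostMinorMap {X Y : Type} [DecidableEq X]
    (GX : SimpleGraph X) (GY : SimpleGraph Y) (M : Y → Finset X) : Prop :=
  (∀ y, (M y).card = 1 ∨ (M y).card = 2) ∧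
  (∀ x, ∃ y, M y = {x}) ∧
  (∀ x x', GX.Adj x x' → ∃ y y', GY.Adj y y' ∧ M y = {x} ∧ M y' = {x'}) ∧
  (∀ x, (GY.induce {y : Y | x ∈ M y}).Connected) ∧
  (∀ y x x', x ≠ x' → M y = {x, x'} → ∀ y', GY.Adj y y' → M y' = {x} ∨ M y' = {x'})

/-- The `Y`-partitioned graph `H*` built from an `X`-partitioned graph `H` (colour classes
`P`) and an almost-minor map `M`.  A vertex `v_a^y` (for `M y = {x}`, `a ∈ P x`) is encoded
as `(y, {a})` and a vertex `v_{{a,b}}^y` (for `M y = {x,x'}`, `a ∈ P x`, `b ∈ P x'`) as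
`(y, {a,b})`.  The edges between the colour classes of adjacent `y, y'` are: a matching on
the second index when `M y = M y' = {x}`; the edges of `H` when `M y = {x}`, `M y' = {x'}`
with `{x,x'} ∈ E(G_X)`; complete bipartite when `x ≠ x'` and `{x,x'} ∉ E(G_X)`; and
`{v_a^y, v_{{a,b}}^{y'}}` when `M y = {x} ⊆ M y' = {x,x'}`. -/
def Hstar {X Y W : Type} [DecidableEq X] [DecidableEq W]
    (GX : SimpleGraph X) (GY : SimpleGraph Y) (H : SimpleGraph W)
    (M : Y → Finset X) (P : X → Set W) : SimpleGraph (Y × Finset W) :=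
  SimpleGraph.fromRel (fun p q =>
    GY.Adj p.1 q.1 ∧ (
      (∃ x, M p.1 = {x} ∧ M q.1 = {x} ∧ ∃ a ∈ P x, p.2 = {a} ∧ q.2 = {a}) ∨
      (∃ x x', M p.1 = {x} ∧ M q.1 = {x'} ∧ GX.Adj x x' ∧
        ∃ a ∈ P x, ∃ b ∈ P x', H.Adj a b ∧ p.2 = {a} ∧ q.2 = {b}) ∨
      (∃ x x', M p.1 = {x} ∧ M q.1 = {x'} ∧ x ≠ x' ∧ ¬ GX.Adj x x' ∧
        ∃ a ∈ P x, ∃ b ∈ P x', p.2 = {a} ∧ q.2 = {b}) ∨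
      (∃ x x', x ≠ x' ∧ M p.1 = {x} ∧ M q.1 = ({x, x'} : Finset X) ∧
        ∃ a ∈ P x, ∃ b ∈ P x', p.2 = {a} ∧ q.2 = ({a, b} : Finset W))))

/-- The colour class of `y` in `H*`. -/
def starClass {X Y W : Type} [DecidableEq X] [DecidableEq W]
    (M : Y → Finset X) (P : X → Set W) (y : Y) : Set (Y × Finset W) :=
  {p | p.1 = y ∧
    ((∃ x, M y = {x} ∧ ∃ a ∈ P x, p.2 = {a}) ∨
     (∃ x x', x ≠ x' ∧ M y = ({x, x'} : Finset X) ∧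
       ∃ a ∈ P x, ∃ b ∈ P x', p.2 = ({a, b} : Finset W)))}

/-!
An `H*`-edge between the colour classes of adjacent `y, y'` whose `M`-images share a vertex `x`
nests the two labels, so the element of `P x` read off at `y` is the same as at `y'`; as the
`y` with `x ∈ M y` induce a connected subgraph, this reading is a single `h x`, and the
edges of `G_X` are realised between singleton classes, where `H*` carries exactly the edges
of `H`. Conversely, since a vertex `y` with `|M y| = 2` has only singleton neighbours
`{x} ⊆ M y`, every edge of `G_Y` is sent by `h*` onto an edge of `H*`.
-/

namespace SimpleGraph

lemma Preconnected.eq_of_forall_adj {V β : Type*} {G : SimpleGraph V} (hG : G.Preconnected)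
    (f : V → β) (hf : ∀ u v, G.Adj u v → f u = f v) (u v : V) : f u = f v := by
  obtain ⟨w⟩ := hG u v
  induction w with
  | nil => rfl
  | cons h _ ih => exact (hf _ _ h).trans ih

end SimpleGraph

lemma exists_forall_apply_eq_of_connected {X Y W : Type*} {G : SimpleGraph Y} {S : X → Set Y}
    (hS : ∀ x, (G.induce (S x)).Connected) (f : Y → X → W)
    (hf : ∀ x y y', G.Adj y y' → y ∈ S x → y' ∈ S x → f y x = f y' x) :
    ∃ h : X → W, ∀ x, ∀ y ∈ S x, f y x = h x :=
  ⟨fun x => f (hS x).nonempty.some.1 x, fun x y hy =>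
    (hS x).preconnected.eq_of_forall_adj (fun u : S x => f u.1 x)
      (fun u v huv => hf x u v huv u.2 v.2) ⟨y, hy⟩ _⟩

lemma apply_eq_of_mem_image {X W : Type*} [DecidableEq W] {P : X → Set W}
    (hP : ∀ w : W, ∃! x : X, w ∈ P x) {S : Finset X} {f : X → W} (hf : ∀ x ∈ S, f x ∈ P x)
    {x : X} {a : W} (ha : a ∈ S.image f) (haP : a ∈ P x) : f x = a := by
  obtain ⟨z, hz, rfl⟩ := Finset.mem_image.1 ha
  rw [(hP (f z)).unique haP (hf z hz)]

namespace IsAlmostMinorMap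

variable {X Y : Type} [DecidableEq X] {GX : SimpleGraph X} {GY : SimpleGraph Y} {M : Y → Finset X}

lemma card_eq_one_or_two (hM : IsAlmostMinorMap GX GY M) (y : Y) :
    (M y).card = 1 ∨ (M y).card = 2 :=
  hM.1 y

lemma eq_singleton_of_adj_of_eq_pair (hM : IsAlmostMinorMap GX GY M) {y y' : Y} {x x' : X}
    (hne : x ≠ x') (hy : M y = {x, x'}) (hyy' : GY.Adj y y') : M y' = {x} ∨ M y' = {x'} :=
  hM.2.2.2.2 y x x' hne hy y' hyy'

end IsAlmostMinorMap

section Hstar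

variable {X Y W : Type} [DecidableEq X] [DecidableEq W]
  {GX : SimpleGraph X} {GY : SimpleGraph Y} {H : SimpleGraph W} {M : Y → Finset X}
  {P : X → Set W}

variable (GX GY H M P) in
def HstarRel (p q : Y × Finset W) : Prop :=
  GY.Adj p.1 q.1 ∧ (
    (∃ x, M p.1 = {x} ∧ M q.1 = {x} ∧ ∃ a ∈ P x, p.2 = {a} ∧ q.2 = {a}) ∨
    (∃ x x', M p.1 = {x} ∧ M q.1 = {x'} ∧ GX.Adj x x' ∧
      ∃ a ∈ P x, ∃ b ∈ P x', H.Adj a b ∧ p.2 = {a} ∧ q.2 = {b}) ∨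
    (∃ x x', M p.1 = {x} ∧ M q.1 = {x'} ∧ x ≠ x' ∧ ¬ GX.Adj x x' ∧
      ∃ a ∈ P x, ∃ b ∈ P x', p.2 = {a} ∧ q.2 = {b}) ∨
    (∃ x x', x ≠ x' ∧ M p.1 = {x} ∧ M q.1 = ({x, x'} : Finset X) ∧
      ∃ a ∈ P x, ∃ b ∈ P x', p.2 = {a} ∧ q.2 = ({a, b} : Finset W)))

lemma hstar_adj_iff {p q : Y × Finset W} :
    (Hstar GX GY H M P).Adj p q ↔ p ≠ q ∧ (HstarRel GX GY H M P p q ∨ HstarRel GX GY H M P q p) :=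
  SimpleGraph.fromRel_adj _ _ _

lemma HstarRel.subset_of_mem_of_mem {p q : Y × Finset W} {x : X}
    (hR : HstarRel GX GY H M P p q) (hp : x ∈ M p.1) (hq : x ∈ M q.1) : p.2 ⊆ q.2 := by
  obtain ⟨-, ⟨x₀, -, -, a, -, hpa, hqa⟩ | ⟨x₀, x₁, hp₀, hq₁, hadj, -⟩ |
    ⟨x₀, x₁, hp₀, hq₁, hne, -⟩ | ⟨x₀, x₁, -, -, -, a, -, b, -, hpa, hqab⟩⟩ := hR
  · rw [hpa, hqa]
  · rw [hp₀, Finset.mem_singleton] at hp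
    rw [hq₁, Finset.mem_singleton] at hq
    exact absurd (hp.symm.trans hq) hadj.ne
  · rw [hp₀, Finset.mem_singleton] at hp
    rw [hq₁, Finset.mem_singleton] at hq
    exact absurd (hp.symm.trans hq) hne
  · simp [hpa, hqab]

lemma hstar_subset_or_subset_of_adj {p q : Y × Finset W} {x : X}
    (hpq : (Hstar GX GY H M P).Adj p q) (hp : x ∈ M p.1) (hq : x ∈ M q.1) :
    p.2 ⊆ q.2 ∨ q.2 ⊆ p.2 := by
  obtain ⟨-, hR | hR⟩ := hstar_adj_iff.1 hpq
  · exact .inl (hR.subset_of_mem_of_mem hp hq)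
  · exact .inr (hR.subset_of_mem_of_mem hq hp)

lemma HstarRel.exists_adj_of_adj {p q : Y × Finset W} {x x' : X}
    (hR : HstarRel GX GY H M P p q) (hp : M p.1 = {x}) (hq : M q.1 = {x'})
    (hxx' : GX.Adj x x') : ∃ a ∈ P x, ∃ b ∈ P x', H.Adj a b ∧ p.2 = {a} ∧ q.2 = {b} := by
  obtain ⟨-, ⟨x₀, hp₀, hq₀, -⟩ | ⟨x₀, x₁, hp₀, hq₁, -, hab⟩ |
    ⟨x₀, x₁, hp₀, hq₁, -, hnadj, -⟩ | ⟨x₀, x₁, hne, -, hq₀₁, -⟩⟩ := hR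
  · exact absurd (Finset.singleton_injective ((hp.symm.trans hp₀).trans (hq₀.symm.trans hq)))
      hxx'.ne
  · obtain rfl := Finset.singleton_injective (hp₀.symm.trans hp)
    obtain rfl := Finset.singleton_injective (hq₁.symm.trans hq)
    exact hab
  · obtain rfl := Finset.singleton_injective (hp₀.symm.trans hp)
    obtain rfl := Finset.singleton_injective (hq₁.symm.trans hq)
    exact absurd hxx' hnadj
  · simpa [Finset.card_pair hne] using congrArg Finset.card (hq₀₁.symm.trans hq)

lemma hstar_exists_adj_of_adj {p q : Y × Finset W} {x x' : X}
    (hpq : (Hstar GX GY H M P).Adj p q) (hp : M p.1 = {x}) (hq : M q.1 = {x'})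
    (hxx' : GX.Adj x x') : ∃ a ∈ P x, ∃ b ∈ P x', H.Adj a b ∧ p.2 = {a} ∧ q.2 = {b} := by
  obtain ⟨-, hR | hR⟩ := hstar_adj_iff.1 hpq
  · exact hR.exists_adj_of_adj hp hq hxx'
  · obtain ⟨b, hb, a, ha, hba, hqb, hpa⟩ := hR.exists_adj_of_adj hq hp hxx'.symm
    exact ⟨a, ha, b, hb, hba.symm, hpa, hqb⟩

lemma exists_image_of_mem_starClass {p : Y × Finset W} {y : Y} (hp : p ∈ starClass M P y) :
    ∃ f : X → W, (∀ x ∈ M y, f x ∈ P x) ∧ p.2 = (M y).image f := by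
  obtain ⟨-, ⟨x, hy, a, ha, hpa⟩ | ⟨x, x', hne, hy, a, ha, b, hb, hpab⟩⟩ := hp
  · refine ⟨fun _ => a, ?_, by simp [hy, hpa]⟩
    simp only [hy, Finset.mem_singleton, forall_eq]
    exact ha
  · refine ⟨Function.update (fun _ => b) x a, ?_, by simp [hy, hpab, hne.symm]⟩
    simp only [hy, Finset.mem_insert, Finset.mem_singleton, forall_eq_or_imp, forall_eq]
    simpa [hne.symm] using ⟨ha, hb⟩

lemma mk_image_mem_starClass {h : X → W} {y : Y} (hcard : (M y).card = 1 ∨ (M y).card = 2)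
    (hP : ∀ x, h x ∈ P x) : (y, (M y).image h) ∈ starClass M P y := by
  refine ⟨rfl, ?_⟩
  rcases hcard with hcard | hcard
  · obtain ⟨x, hx⟩ := Finset.card_eq_one.1 hcard
    exact .inl ⟨x, hx, h x, hP x, by simp [hx]⟩
  · obtain ⟨x, x', hne, hx⟩ := Finset.card_eq_two.1 hcard
    exact .inr ⟨x, x', hne, hx, h x, hP x, h x', hP x', by simp [hx]⟩

lemma hstarRel_image_of_singleton (hM : IsAlmostMinorMap GX GY M) {h : X → W}
    (hP : ∀ x, h x ∈ P x) (hE : ∀ x x', GX.Adj x x' → H.Adj (h x) (h x')) {y y' : Y} {x : X}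
    (hyy' : GY.Adj y y') (hx : M y = {x}) :
    HstarRel GX GY H M P (y, (M y).image h) (y', (M y').image h) := by
  refine ⟨hyy', ?_⟩
  rcases hM.card_eq_one_or_two y' with hcard' | hcard'
  · obtain ⟨x', hx'⟩ := Finset.card_eq_one.1 hcard'
    by_cases hxx' : x = x'
    · subst hxx'
      exact .inl ⟨x, hx, hx', h x, hP x, by simp [hx], by simp [hx']⟩
    by_cases hadj : GX.Adj x x'
    · exact .inr <| .inl ⟨x, x', hx, hx', hadj, h x, hP x, h x', hP x', hE x x' hadj,
        by simp [hx], by simp [hx']⟩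
    · exact .inr <| .inr <| .inl ⟨x, x', hx, hx', hxx', hadj, h x, hP x, h x', hP x',
        by simp [hx], by simp [hx']⟩
  · obtain ⟨x₁, x₂, hne, hx₁₂⟩ := Finset.card_eq_two.1 hcard'
    obtain ⟨x', hxx', hx'⟩ : ∃ x', x ≠ x' ∧ M y' = {x, x'} := by
      rcases hM.eq_singleton_of_adj_of_eq_pair hne hx₁₂ hyy'.symm with hy | hy
      · obtain rfl := Finset.singleton_injective (hx.symm.trans hy)
        exact ⟨x₂, hne, hx₁₂⟩
      · obtain rfl := Finset.singleton_injective (hx.symm.trans hy)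
        exact ⟨x₁, hne.symm, hx₁₂.trans (Finset.pair_comm _ _)⟩
    exact .inr <| .inr <| .inr ⟨x, x', hxx', hx, hx', h x, hP x, h x', hP x',
      by simp [hx], by simp [hx']⟩

lemma hstar_adj_image (hM : IsAlmostMinorMap GX GY M) {h : X → W}
    (hP : ∀ x, h x ∈ P x) (hE : ∀ x x', GX.Adj x x' → H.Adj (h x) (h x')) {y y' : Y}
    (hyy' : GY.Adj y y') : (Hstar GX GY H M P).Adj (y, (M y).image h) (y', (M y').image h) := by
  refine hstar_adj_iff.2 ⟨fun he => hyy'.ne (congrArg Prod.fst he), ?_⟩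
  rcases hM.card_eq_one_or_two y with hcard | hcard
  · obtain ⟨x, hx⟩ := Finset.card_eq_one.1 hcard
    exact .inl (hstarRel_image_of_singleton hM hP hE hyy' hx)
  · obtain ⟨x₁, x₂, hne, hx₁₂⟩ := Finset.card_eq_two.1 hcard
    obtain ⟨x, hx⟩ : ∃ x, M y' = {x} :=
      (hM.eq_singleton_of_adj_of_eq_pair hne hx₁₂ hyy').elim (⟨_, ·⟩) (⟨_, ·⟩)
    exact .inr (hstarRel_image_of_singleton hM hP hE hyy'.symm hx)

lemma exists_lift_of_hstar_hom (hM : IsAlmostMinorMap GX GY M)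
    (hpart : ∀ w : W, ∃! x : X, w ∈ P x) {g : Y → Y × Finset W}
    (hclass : ∀ y, g y ∈ starClass M P y)
    (hadj : ∀ y y', GY.Adj y y' → (Hstar GX GY H M P).Adj (g y) (g y')) :
    ∃ h : X → W, (∀ x, h x ∈ P x) ∧ (∀ x x', GX.Adj x x' → H.Adj (h x) (h x')) ∧
      g = fun y => (y, (M y).image h) := by
  obtain ⟨-, -, hedge, hconn, -⟩ := hM
  have hfst (y : Y) : (g y).1 = y := (hclass y).1
  choose f hfP hfg using fun y => exists_image_of_mem_starClass (hclass y)
  have hmem (y : Y) (x : X) (hx : x ∈ M y) : f y x ∈ (g y).2 :=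
    hfg y ▸ Finset.mem_image_of_mem _ hx
  have hread (y : Y) (x : X) (a : W) (ha : a ∈ (g y).2) (haP : a ∈ P x) : f y x = a :=
    apply_eq_of_mem_image hpart (hfP y) (hfg y ▸ ha) haP
  obtain ⟨h, hfh⟩ := exists_forall_apply_eq_of_connected hconn f fun x y y' hyy' hy hy' => by
    rcases hstar_subset_or_subset_of_adj (hadj y y' hyy') (x := x) ((hfst y).symm ▸ hy)
      ((hfst y').symm ▸ hy') with hsub | hsub
    · exact (hread y' x _ (hsub (hmem y x hy)) (hfP y x hy)).symm
    · exact hread y x _ (hsub (hmem y' x hy')) (hfP y' x hy')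
  refine ⟨h, fun x => ?_, fun x x' hxx' => ?_, funext fun y => Prod.ext (hfst y) ?_⟩
  · obtain ⟨⟨y, hy⟩⟩ := (hconn x).nonempty
    exact hfh x y hy ▸ hfP y x hy
  · obtain ⟨y, y', hyy', hy, hy'⟩ := hedge x x' hxx'
    obtain ⟨a, -, b, -, hab, hya, hyb'⟩ := hstar_exists_adj_of_adj (hadj y y' hyy')
      ((hfst y).symm ▸ hy) ((hfst y').symm ▸ hy') hxx'
    have hxa : h x = a := by
      simpa [← hfh x y (by simp [hy]), hya] using hmem y x (by simp [hy])
    have hxb : h x' = b := by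
      simpa [← hfh x' y' (by simp [hy']), hyb'] using hmem y' x' (by simp [hy'])
    rwa [hxa, hxb]
  · rw [hfg y]
    exact Finset.image_congr fun x hx => hfh x y hx

end Hstar

/-- the colour-preserving homomorphisms from `G_Y^id` to `H*` are exactly
the maps `h*` for colour-preserving homomorphisms `h` from `G_X^id` to `H`, where
`h* y = v_{h x}^y` if `M y = {x}` and `h* y = v_{{h x, h x'}}^y` if `M y = {x, x'}`
(both cases being `h* y = (y, (M y).image h)`). -/
theorem stmt_15 {X Y W : Type} [DecidableEq X] [DecidableEq W]
    (GX : SimpleGraph X) (GY : SimpleGraph Y) (M : Y → Finset X)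
    (hM : IsAlmostMinorMap GX GY M)
    (H : SimpleGraph W) (P : X → Set W) (hpart : ∀ w : W, ∃! x : X, w ∈ P x) :
    {g : Y → Y × Finset W | (∀ y, g y ∈ starClass M P y) ∧
        ∀ y y', GY.Adj y y' → (Hstar GX GY H M P).Adj (g y) (g y')} =
      {g : Y → Y × Finset W | ∃ h : X → W, (∀ x, h x ∈ P x) ∧
        (∀ x x', GX.Adj x x' → H.Adj (h x) (h x')) ∧
        g = fun y => (y, (M y).image h)} := by
  ext g
  constructor
  · rintro ⟨hclass, hadj⟩
    exact exists_lift_of_hstar_hom hM hpart hclass hadj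
  · rintro ⟨h, hP, hE, rfl⟩
    exact ⟨fun y => mk_image_mem_starClass (hM.card_eq_one_or_two y) hP,
      fun _ _ => hstar_adj_image hM hP hE⟩
end

section
/- Consider the 3-cycle K_3 on vertices x_1,x_2,x_3 and the 4-cycle C_4 on x_1,x_2,x_3,x_4 with edges {x_1,x_2},{x_2,x_3},{x_3,x_4},{x_4,x_1}. Let H be a {x_1,x_2,x_3}-partitioned graph and define the {x_1,x_2,x_3,x_4}-partitioned graph H' by P'_{x_i} = P_{x_i} for i ≤ 3, P'_{x_4} = { v̂ : v ∈ P_{x_1} } (a disjoint copy), with edges: {v, v̂} for v ∈ P_{x_1}; {v,w} for v ∈ P_{x_1}, w ∈ P_{x_2} with {v,w} ∈ E(H); {v,w} for v ∈ P_{x_2}, w ∈ P_{x_3} with {v,w} ∈ E(H); and {v, ŵ} for v ∈ P_{x_3}, w ∈ P_{x_1} with {v,w} ∈ E(H). Then a map h' : {x_1,x_2,x_3,x_4} → V(H') is a colour-preserving homomorphism from C_4 to H' if and only if h'(x_4) = (h'(x_1))^ and the restriction of h' to {x_1,x_2,x_3} is a colour-preserving homomorphism from K_3 to H. Consequently, the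 colour-preserving homomorphism set Hom(K_3^id, H) equals the projection to {x_1,x_2,x_3} of Hom(C_4^id, H'). -/
/-- The `{x_1,x_2,x_3,x_4}`-partitioned graph `H'` built from a `{x_1,x_2,x_3}`-partitioned
graph `H` (colour classes `P 0, P 1, P 2`, corresponding to `x_1, x_2, x_3`): its vertex
type is `W ⊕ W`, `Sum.inl v` being the original vertex `v` and `Sum.inr v` the hatted copy
`v̂` of `v ∈ P x_1`.  Edges: `{v, v̂}` for `v ∈ P x_1`; `{v,w}` for `{v,w} ∈ E(H)` with
`v ∈ P x_1, w ∈ P x_2` or `v ∈ P x_2, w ∈ P x_3`; and `{v, ŵ}` for `v ∈ P x_3`,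
`w ∈ P x_1`, `{v,w} ∈ E(H)`. -/
def Hprime {W : Type} (H : SimpleGraph W) (P : Fin 3 → Set W) : SimpleGraph (W ⊕ W) :=
  SimpleGraph.fromRel (fun p q =>
    (∃ v ∈ P 0, p = Sum.inl v ∧ q = Sum.inr v) ∨
    (∃ v ∈ P 0, ∃ w ∈ P 1, H.Adj v w ∧ p = Sum.inl v ∧ q = Sum.inl w) ∨
    (∃ v ∈ P 1, ∃ w ∈ P 2, H.Adj v w ∧ p = Sum.inl v ∧ q = Sum.inl w) ∨
    (∃ v ∈ P 2, ∃ w ∈ P 0, H.Adj v w ∧ p = Sum.inl v ∧ q = Sum.inr w))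

/-- The colour classes of `H'`: `P'_{x_i} = P_{x_i}` for `i ≤ 3` (as original vertices) and
`P'_{x_4} = {v̂ : v ∈ P x_1}`. -/
def Pprime {W : Type} (P : Fin 3 → Set W) (i : Fin 4) : Set (W ⊕ W) :=
  if h : i.val < 3 then Sum.inl '' P ⟨i.val, h⟩ else Sum.inr '' P 0

/-!
Every edge of `H'` joins two consecutive classes of the 4-cycle `x₁x₂x₃x₄`, so a
colour-preserving copy of `C₄` in `H'` is a path `a, b, c, v̂` with `a ∈ P x₁`, `b ∈ P x₂`,
`c ∈ P x₃`, `v ∈ P x₁`, closed by an edge `v̂ a`. Since the classes are disjoint, `a ∉ P x₃`,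
so that edge is the matching edge and `v = a`; likewise `c ∉ P x₁`, so `c v̂` is the hatted
copy of the edge `c a` of `H`. Thus the copies of `C₄` are exactly the triangles `a b c` of `H`,
extended by `â`.
-/

open SimpleGraph

def IsColourPreservingHom {V W : Type*} (G : SimpleGraph V) (H : SimpleGraph W) (P : V → Set W)
    (f : V → W) : Prop :=
  (∀ x, f x ∈ P x) ∧ ∀ x y, G.Adj x y → H.Adj (f x) (f y)

theorem isColourPreservingHom_cycleGraph_iff {V : Type*} {n : ℕ} (H : SimpleGraph V)
    (P : Fin (n + 2) → Set V) (f : Fin (n + 2) → V) :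
    IsColourPreservingHom (cycleGraph (n + 2)) H P f ↔
      (∀ i, f i ∈ P i) ∧ ∀ i, H.Adj (f i) (f (i + 1)) := by
  refine and_congr_right fun _ => ⟨fun h i => h _ _ (Or.inr (add_sub_cancel_left i 1)), ?_⟩
  rintro h i j (hij | hij)
  · rw [sub_eq_iff_eq_add'] at hij
    exact hij ▸ (h j).symm
  · rw [sub_eq_iff_eq_add'] at hij
    exact hij ▸ h i

theorem isColourPreservingHom_top_fin_three_iff {V : Type*} (H : SimpleGraph V)
    (P : Fin 3 → Set V) (f : Fin 3 → V) :
    IsColourPreservingHom ⊤ H P f ↔ (f 0 ∈ P 0 ∧ f 1 ∈ P 1 ∧ f 2 ∈ P 2) ∧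
      H.Adj (f 0) (f 1) ∧ H.Adj (f 1) (f 2) ∧ H.Adj (f 2) (f 0) := by
  rw [← cycleGraph_three_eq_top, isColourPreservingHom_cycleGraph_iff]
  simp [Fin.forall_fin_succ]

theorem isColourPreservingHom_cycleGraph_four_iff {V : Type*} (H : SimpleGraph V)
    (P : Fin 4 → Set V) (f : Fin 4 → V) :
    IsColourPreservingHom (cycleGraph 4) H P f ↔
      (f 0 ∈ P 0 ∧ f 1 ∈ P 1 ∧ f 2 ∈ P 2 ∧ f 3 ∈ P 3) ∧
      H.Adj (f 0) (f 1) ∧ H.Adj (f 1) (f 2) ∧ H.Adj (f 2) (f 3) ∧ H.Adj (f 3) (f 0) := by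
  rw [isColourPreservingHom_cycleGraph_iff (n := 2)]
  simp [Fin.forall_fin_succ]

section Hprime

variable {W : Type} {H : SimpleGraph W} {P : Fin 3 → Set W} {a b c v : W}

theorem Hprime.adj_inl_inl_iff : (Hprime H P).Adj (.inl a) (.inl b) ↔ H.Adj a b ∧
    (a ∈ P 0 ∧ b ∈ P 1 ∨ a ∈ P 1 ∧ b ∈ P 2 ∨ b ∈ P 0 ∧ a ∈ P 1 ∨ b ∈ P 1 ∧ a ∈ P 2) := by
  simp only [Hprime, fromRel_adj]
  aesop (add safe forward Adj.ne, safe forward Adj.symm)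

theorem Hprime.adj_inl_inr_iff : (Hprime H P).Adj (.inl a) (.inr v) ↔
    v ∈ P 0 ∧ a = v ∨ a ∈ P 2 ∧ v ∈ P 0 ∧ H.Adj a v := by
  simp [Hprime]

theorem Hprime.adj_square_iff (hdisj : Disjoint (P 0) (P 2)) (ha : a ∈ P 0) (hb : b ∈ P 1)
    (hc : c ∈ P 2) (hv : v ∈ P 0) :
    (Hprime H P).Adj (.inl a) (.inl b) ∧ (Hprime H P).Adj (.inl b) (.inl c) ∧
      (Hprime H P).Adj (.inl c) (.inr v) ∧ (Hprime H P).Adj (.inr v) (.inl a) ↔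
    v = a ∧ H.Adj a b ∧ H.Adj b c ∧ H.Adj c a := by
  have ha2 : a ∉ P 2 := Set.disjoint_left.mp hdisj ha
  have hc0 : c ∉ P 0 := Set.disjoint_right.mp hdisj hc
  rw [(Hprime H P).adj_comm (.inr v), adj_inl_inl_iff, adj_inl_inl_iff, adj_inl_inr_iff,
    adj_inl_inr_iff]
  aesop

end Hprime

theorem isColourPreservingHom_cycleGraph_four_Hprime_iff {W : Type} {H : SimpleGraph W}
    {P : Fin 3 → Set W} (hdisj : Disjoint (P 0) (P 2)) (h' : Fin 4 → W ⊕ W) :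
    IsColourPreservingHom (cycleGraph 4) (Hprime H P) (Pprime P) h' ↔
      (∃ v ∈ P 0, h' 0 = .inl v ∧ h' 3 = .inr v) ∧
        ∃ h, IsColourPreservingHom ⊤ H P h ∧ ∀ i, h' i.castSucc = .inl (h i) := by
  simp only [isColourPreservingHom_cycleGraph_four_iff, isColourPreservingHom_top_fin_three_iff]
  constructor
  · rintro ⟨⟨⟨a, ha, e0⟩, ⟨b, hb, e1⟩, ⟨c, hc, e2⟩, ⟨v, hv, e3⟩⟩, hadj⟩
    rw [← e0, ← e1, ← e2, ← e3, Hprime.adj_square_iff hdisj ha hb hc hv] at hadj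
    obtain ⟨rfl, hab, hbc, hca⟩ := hadj
    refine ⟨⟨v, hv, e0.symm, e3.symm⟩, ![v, b, c], ⟨⟨ha, hb, hc⟩, hab, hbc, hca⟩, ?_⟩
    simp [Fin.forall_fin_succ, e0, e1, e2]
  · rintro ⟨⟨v, hv, e0, e3⟩, h, ⟨⟨h0, h1, h2⟩, hadj⟩, he⟩
    have e0' : h' 0 = .inl (h 0) := he 0
    have e1 : h' 1 = .inl (h 1) := he 1
    have e2 : h' 2 = .inl (h 2) := he 2
    obtain rfl : v = h 0 := Sum.inl_injective (e0.symm.trans e0')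
    rw [e0', e1, e2, e3, Hprime.adj_square_iff hdisj h0 h1 h2 h0]
    exact ⟨⟨⟨_, h0, rfl⟩, ⟨_, h1, rfl⟩, ⟨_, h2, rfl⟩, ⟨_, h0, rfl⟩⟩, rfl, hadj⟩

/-- `h' : {x_1,…,x_4} → V(H')` is a colour-preserving homomorphism from the
4-cycle `C_4` to `H'` iff `h'(x_4) = (h'(x_1))^` and the restriction of `h'` to
`{x_1,x_2,x_3}` is a colour-preserving homomorphism from `K_3` to `H`; consequently,
`Hom(K_3^id, H)` is the projection of `Hom(C_4^id, H')` to `{x_1,x_2,x_3}`. -/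
theorem stmt_17 {W : Type} (H : SimpleGraph W) (P : Fin 3 → Set W)
    (hpart : ∀ w : W, ∃! i : Fin 3, w ∈ P i) :
    (∀ h' : Fin 4 → W ⊕ W,
      ((∀ i : Fin 4, h' i ∈ Pprime P i) ∧
          ∀ i j : Fin 4, (SimpleGraph.cycleGraph 4).Adj i j →
            (Hprime H P).Adj (h' i) (h' j)) ↔
        ((∃ v ∈ P 0, h' 0 = Sum.inl v ∧ h' 3 = Sum.inr v) ∧
          ∃ h : Fin 3 → W, (∀ i : Fin 3, h i ∈ P i) ∧
            (∀ i j : Fin 3, i ≠ j → H.Adj (h i) (h j)) ∧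
            ∀ i : Fin 3, h' i.castSucc = Sum.inl (h i))) ∧
    (∀ h : Fin 3 → W,
      ((∀ i : Fin 3, h i ∈ P i) ∧ ∀ i j : Fin 3, i ≠ j → H.Adj (h i) (h j)) ↔
        ∃ h' : Fin 4 → W ⊕ W,
          (∀ i : Fin 4, h' i ∈ Pprime P i) ∧
          (∀ i j : Fin 4, (SimpleGraph.cycleGraph 4).Adj i j →
            (Hprime H P).Adj (h' i) (h' j)) ∧
          ∀ i : Fin 3, h' i.castSucc = Sum.inl (h i)) := by
  have hdisj : Disjoint (P 0) (P 2) :=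
    Set.disjoint_left.mpr fun w h0 h2 => absurd ((hpart w).unique h0 h2) (by decide)
  have key := isColourPreservingHom_cycleGraph_four_Hprime_iff (H := H) hdisj
  refine ⟨fun h' => by simpa only [IsColourPreservingHom, top_adj, and_assoc] using key h',
    fun h => ⟨fun hh => ?_, ?_⟩⟩
  · obtain ⟨hmem, hadj⟩ :=
      (key (Fin.snoc (α := fun _ => W ⊕ W) (Sum.inl ∘ h) (.inr (h 0)))).mpr
        ⟨⟨h 0, hh.1 0, rfl, rfl⟩, h, hh, fun i => Fin.snoc_castSucc ..⟩
    exact ⟨_, hmem, hadj, fun i => Fin.snoc_castSucc ..⟩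
  · rintro ⟨h', hmem, hadj, he⟩
    obtain ⟨-, h₀, hh₀, he₀⟩ := (key h').mp ⟨hmem, hadj⟩
    obtain rfl : h₀ = h := funext fun i => Sum.inl_injective ((he₀ i).symm.trans (he i))
    exact hh₀
end
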